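/- For any MAC W : X1 × X2 → Y on finite alphabets and all positive integers ℓ1, k1, ℓ2, k2: min( (k1/ℓ1)(1 − (1 − 1/k1)^{ℓ1}), (k2/ℓ2)(1 − (1 − 1/k2)^{ℓ2}) ) · S_sum^{NS_SR}(W,k1,k2) ≤ S_sum(W,ℓ1,ℓ2). -/

import Mathlib

open Finset

section Defs

variable {X1 X2 Y : Type*}

/-- `S_sum(W,ℓ1,ℓ2)`: maximum sum (averaged individual) success probability over
classical stochastic encoders and a pair of decoders. -/
noncomputable def Ssum [Fintype X1] [Fintype X2] [Fintype Y]
    (W : X1 → X2 → Y → ℝ) (k1 k2 : ℕ) : ℝ :=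
  sSup {s : ℝ | ∃ (e1 : Fin k1 → X1 → ℝ) (e2 : Fin k2 → X2 → ℝ)
      (d1 : Y → Fin k1 → ℝ) (d2 : Y → Fin k2 → ℝ),
    (∀ i1 x1, 0 ≤ e1 i1 x1) ∧ (∀ i1, ∑ x1, e1 i1 x1 = 1) ∧
    (∀ i2 x2, 0 ≤ e2 i2 x2) ∧ (∀ i2, ∑ x2, e2 i2 x2 = 1) ∧
    (∀ y j1, 0 ≤ d1 y j1) ∧ (∀ y, ∑ j1, d1 y j1 = 1) ∧
    (∀ y j2, 0 ≤ d2 y j2) ∧ (∀ y, ∑ j2, d2 y j2 = 1) ∧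
    s = (1 / (2 * (k1 : ℝ) * (k2 : ℝ))) * ∑ i1, ∑ i2, ∑ x1, ∑ x2, ∑ y,
      W x1 x2 y * e1 i1 x1 * e2 i2 x2 * (d1 y i1 + d2 y i2)}

/-- A bipartite non-signaling box `P(x,j|i,y)` between one sender and the receiver,
with `k` messages.  Arguments of `P` are in the order `x j i y`. -/
def IsNSBox1 {X Y : Type*} [Fintype X] [Fintype Y] (k : ℕ)
    (P : X → Fin k → Fin k → Y → ℝ) : Prop :=
  (∀ x j i y, 0 ≤ P x j i y) ∧
  (∀ i y, ∑ x, ∑ j, P x j i y = 1) ∧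
  (∀ j i i' y, ∑ x, P x j i y = ∑ x, P x j i' y) ∧
  (∀ x i y y', ∑ j, P x j i y = ∑ j, P x j i y')

/-- `S_sum^{NS_SR}(W,k1,k2)`: maximum sum (averaged individual) success probability
with independent non-signaling assistance between each sender and the receiver. -/
noncomputable def SNSsrSum [Fintype X1] [Fintype X2] [Fintype Y]
    (W : X1 → X2 → Y → ℝ) (k1 k2 : ℕ) : ℝ :=
  sSup {s : ℝ | ∃ (P1 : X1 → Fin k1 → Fin k1 → Y → ℝ) (P2 : X2 → Fin k2 → Fin k2 → Y → ℝ),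
    IsNSBox1 k1 P1 ∧ IsNSBox1 k2 P2 ∧
    s = (1 / (2 * (k1 : ℝ) * (k2 : ℝ))) * ∑ i1, ∑ i2, ∑ x1, ∑ x2, ∑ y,
      W x1 x2 y *
        (P1 x1 i1 i1 y * ∑ j2, P2 x2 j2 i2 y + P2 x2 i2 i2 y * ∑ j1, P1 x1 j1 i1 y)}

end Defs

/-!
For sender `i`, average the box over messages: `pᵢ x = (1/kᵢ) ∑ₘ ∑ⱼ Pᵢ(x,j|m,y)` is an input
distribution independent of `y` (non-signaling), and `zᵢ x y = (1/kᵢ) ∑ₘ Pᵢ(x,m|m,y)` satisfies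
`zᵢ ≤ pᵢ` and `∑ₓ zᵢ x y = 1/kᵢ`. The non-signaling value is `½ (∑ W z₁ p₂ + ∑ W p₁ z₂)`.

Rounding: sender `i` draws `ℓᵢ` i.i.d. codewords from `pᵢ`; on output `y`, decoder `i` accepts
each message independently with probability `zᵢ/pᵢ` at its codeword and guesses uniformly among
the accepted messages. A message is accepted with probability `∑ₓ zᵢ x y = 1/kᵢ`, and summed over
messages the success probability loses only the event that nothing is accepted, of probability
`(1 - 1/kᵢ)^ℓᵢ`. So the random code achieves on average at least the smaller factor
`(kᵢ/ℓᵢ)(1 - (1 - 1/kᵢ)^ℓᵢ)` times the non-signaling value, and each of its realisations is a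
classical code.
-/

section Codebook

variable {ι X : Type*} [Fintype ι] [DecidableEq ι] [Fintype X]

lemma sum_prod_mul_apply (p : X → ℝ) (h : ι → X → ℝ) (f : X → ℝ) (m : ι) :
    ∑ c : ι → X, (∏ i, p (c i) * h i (c i)) * f (c m) =
      (∑ x, p x * h m x * f x) * ∏ i ∈ univ.erase m, ∑ x, p x * h i x := by
  have hsplit (c : ι → X) : (∏ i, p (c i) * h i (c i)) * f (c m) =
      ∏ i, p (c i) * h i (c i) * if i = m then f (c i) else 1 := by
    rw [prod_mul_distrib (f := fun i => p (c i) * h i (c i)), prod_ite_eq' univ m,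
      if_pos (mem_univ m)]
  simp_rw [hsplit]
  rw [← Fintype.prod_sum fun i x => p x * h i x * if i = m then f x else 1,
    ← mul_prod_erase _ _ (mem_univ m)]
  congr 1
  · simp
  · exact prod_congr rfl fun i hi => by simp [ne_of_mem_erase hi]

variable {p : X → ℝ}

lemma sum_prod_eq_one (hp : ∑ x, p x = 1) : ∑ c : ι → X, ∏ i, p (c i) = 1 := by
  rw [← Fintype.prod_sum]
  simp [hp]

lemma sum_prod_mul_apply_eq (hp : ∑ x, p x = 1) (f : X → ℝ) (m : ι) :
    ∑ c : ι → X, (∏ i, p (c i)) * f (c m) = ∑ x, p x * f x := by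
  simpa [hp] using sum_prod_mul_apply p (fun _ _ => 1) f m

lemma sum_prod_mul_sum_apply (hp : ∑ x, p x = 1) (f : X → ℝ) :
    ∑ c : ι → X, (∏ i, p (c i)) * ∑ m, f (c m) = Fintype.card ι * ∑ x, p x * f x := by
  simp_rw [mul_sum]
  rw [sum_comm]
  simp only [sum_prod_mul_apply_eq hp, sum_const, card_univ, nsmul_eq_mul, mul_sum]

end Codebook

section AcceptDecoder

variable {ι : Type*} [Fintype ι] [DecidableEq ι]

/- The decoder of the rounding accepts each message `i` independently with probability `Q i`, so
that exactly `S` is accepted with probability `acceptProb Q S`, and then guesses uniformly in `S`,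
or in all messages if `S = ∅`. -/
noncomputable def acceptProb (Q : ι → ℝ) (S : Finset ι) : ℝ :=
  ∏ i, if i ∈ S then Q i else 1 - Q i

lemma acceptProb_nonneg {Q : ι → ℝ} (hQ0 : ∀ i, 0 ≤ Q i) (hQ1 : ∀ i, Q i ≤ 1) (S : Finset ι) :
    0 ≤ acceptProb Q S :=
  prod_nonneg fun i _ => by split_ifs <;> linarith [hQ0 i, hQ1 i]

lemma sum_acceptProb (Q : ι → ℝ) : ∑ S, acceptProb Q S = 1 := by
  have := Fintype.prod_add Q (fun i => 1 - Q i)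
  simp only [add_sub_cancel, prod_const_one] at this
  rw [this]
  refine sum_congr rfl fun S _ => ?_
  rw [acceptProb, prod_ite, filter_mem_eq_inter, univ_inter, compl_eq_univ_sdiff, ← sdiff_eq_filter]

lemma acceptProb_const_empty (r : ℝ) :
    acceptProb (fun _ : ι => r) ∅ = (1 - r) ^ Fintype.card ι := by
  simp [acceptProb]

noncomputable def uniformOnAccepted (S : Finset ι) (m : ι) : ℝ :=
  if S = ∅ then (Fintype.card ι : ℝ)⁻¹ else if m ∈ S then (#S : ℝ)⁻¹ else 0

lemma uniformOnAccepted_nonneg (S : Finset ι) (m : ι) : 0 ≤ uniformOnAccepted S m := by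
  unfold uniformOnAccepted
  split_ifs <;> positivity

lemma sum_uniformOnAccepted [Nonempty ι] (S : Finset ι) : ∑ m, uniformOnAccepted S m = 1 := by
  unfold uniformOnAccepted
  split_ifs with hS
  · simp
  · rw [sum_ite_mem, univ_inter, sum_const, nsmul_eq_mul,
      mul_inv_cancel₀ (by simpa [Finset.card_eq_zero] using hS)]

lemma sum_uniformOnAccepted_self (S : Finset ι) :
    ∑ m ∈ S, uniformOnAccepted S m = if S = ∅ then 0 else 1 := by
  unfold uniformOnAccepted
  split_ifs with hS
  · simp [hS]
  · rw [sum_const, nsmul_eq_mul, mul_inv_cancel₀ (by simpa [Finset.card_eq_zero] using hS)]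

lemma sum_sum_uniformOnAccepted_self_mul_acceptProb (Q : ι → ℝ) :
    ∑ S, (∑ m ∈ S, uniformOnAccepted S m) * acceptProb Q S = 1 - acceptProb Q ∅ := by
  have htotal := sum_acceptProb Q
  rw [Fintype.sum_eq_add_sum_compl ∅] at htotal
  simp only [sum_uniformOnAccepted_self, ite_mul, zero_mul, one_mul]
  rw [Fintype.sum_eq_add_sum_compl ∅, if_pos rfl, zero_add,
    sum_congr rfl fun S hS => if_neg (by simpa using hS)]
  linarith

noncomputable def acceptDecoder (Q : ι → ℝ) (m : ι) : ℝ :=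
  ∑ S, acceptProb Q S * uniformOnAccepted S m

lemma acceptDecoder_nonneg {Q : ι → ℝ} (hQ0 : ∀ i, 0 ≤ Q i) (hQ1 : ∀ i, Q i ≤ 1) (m : ι) :
    0 ≤ acceptDecoder Q m :=
  sum_nonneg fun S _ => mul_nonneg (acceptProb_nonneg hQ0 hQ1 S) (uniformOnAccepted_nonneg S m)

lemma sum_acceptDecoder [Nonempty ι] (Q : ι → ℝ) : ∑ m, acceptDecoder Q m = 1 := by
  simp only [acceptDecoder]
  rw [sum_comm]
  simp [← mul_sum, sum_uniformOnAccepted, sum_acceptProb]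

variable {X : Type*} [Fintype X] {p q : X → ℝ}

lemma mul_sum_prod_mul_acceptProb {r : ℝ} (hp : ∑ x, p x = 1) (hr : ∑ x, p x * q x = r)
    (f : X → ℝ) {S : Finset ι} {m : ι} (hm : m ∈ S) :
    r * ∑ c : ι → X, (∏ i, p (c i)) * (acceptProb (fun i => q (c i)) S * f (c m)) =
      (∑ x, p x * q x * f x) * acceptProb (fun _ => r) S := by
  have hfactor (i : ι) : ∑ x, p x * (if i ∈ S then q x else 1 - q x) =
      if i ∈ S then r else 1 - r := by
    split_ifs
    · exact hr
    · simp [mul_sub, sum_sub_distrib, hp, hr]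
  have hc (c : ι → X) : (∏ i, p (c i)) * (acceptProb (fun i => q (c i)) S * f (c m)) =
      (∏ i, p (c i) * (if i ∈ S then q (c i) else 1 - q (c i))) * f (c m) := by
    rw [prod_mul_distrib, acceptProb, mul_assoc]
  rw [sum_congr rfl fun c _ => hc c,
    sum_prod_mul_apply p (fun i x => if i ∈ S then q x else 1 - q x) f m, acceptProb,
    ← mul_prod_erase _ _ (mem_univ m)]
  simp only [hfactor, if_pos hm]
  ring

/-- For `m ∈ S`, `r` times the weight of "accepted set `S`, codeword of `m` weighted by `f`" is
`(∑ₓ p q f) · acceptProb r S`; averaging over `m ∈ S` and summing over `S ≠ ∅` gives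
`1 - acceptProb r ∅`. -/
theorem acceptDecoder_bound {r : ℝ} (hp0 : ∀ x, 0 ≤ p x) (hp1 : ∑ x, p x = 1)
    (hq0 : ∀ x, 0 ≤ q x) (hq1 : ∀ x, q x ≤ 1) (hr : ∑ x, p x * q x = r)
    {f : X → ℝ} (hf : ∀ x, 0 ≤ f x) :
    (1 - (1 - r) ^ Fintype.card ι) * ∑ x, p x * q x * f x ≤
      r * ∑ c : ι → X, (∏ i, p (c i)) * ∑ m, f (c m) * acceptDecoder (fun i => q (c i)) m := by
  set E : Finset ι → ι → ℝ := fun S m =>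
    ∑ c : ι → X, (∏ i, p (c i)) * (acceptProb (fun i => q (c i)) S * f (c m))
  have hE (S : Finset ι) (m : ι) : 0 ≤ E S m :=
    sum_nonneg fun c _ => mul_nonneg (prod_nonneg fun i _ => hp0 _)
      (mul_nonneg (acceptProb_nonneg (fun i => hq0 _) (fun i => hq1 _) S) (hf _))
  have hr0 : 0 ≤ r := hr ▸ sum_nonneg fun x _ => mul_nonneg (hp0 x) (hq0 x)
  calc (1 - (1 - r) ^ Fintype.card ι) * ∑ x, p x * q x * f x
      = ∑ S : Finset ι, (∑ m ∈ S, uniformOnAccepted S m) *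
          ((∑ x, p x * q x * f x) * acceptProb (fun _ => r) S) := by
        rw [← acceptProb_const_empty, ← sum_sum_uniformOnAccepted_self_mul_acceptProb, sum_mul]
        exact sum_congr rfl fun S _ => by ring
    _ = ∑ S, ∑ m ∈ S, uniformOnAccepted S m * (r * E S m) := by
        refine sum_congr rfl fun S _ => ?_
        rw [sum_mul]
        exact sum_congr rfl fun m hm => by rw [mul_sum_prod_mul_acceptProb hp1 hr f hm]
    _ ≤ ∑ S, ∑ m, uniformOnAccepted S m * (r * E S m) :=
        sum_le_sum fun S _ => sum_le_sum_of_subset_of_nonneg (subset_univ S) fun m _ _ =>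
          mul_nonneg (uniformOnAccepted_nonneg S m) (mul_nonneg hr0 (hE S m))
    _ = _ := by
        simp only [E, acceptDecoder, mul_sum]
        rw [sum_comm]
        conv_rhs => rw [sum_comm]
        refine sum_congr rfl fun m _ => ?_
        rw [sum_comm]
        exact sum_congr rfl fun c _ => sum_congr rfl fun S _ => by ring

end AcceptDecoder

theorem mul_sum_le_sum_acceptDecoder {X Y : Type*} [Fintype X] [Fintype Y] {ℓ k : ℕ}
    (hk : 0 < k) {p : X → ℝ} {q V : X → Y → ℝ} (hp0 : ∀ x, 0 ≤ p x) (hp1 : ∑ x, p x = 1)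
    (hq0 : ∀ x y, 0 ≤ q x y) (hq1 : ∀ x y, q x y ≤ 1) (hr : ∀ y, ∑ x, p x * q x y = 1 / k)
    (hV : ∀ x y, 0 ≤ V x y) :
    (k / ℓ) * (1 - (1 - 1 / (k : ℝ)) ^ ℓ) * ∑ y, ∑ x, p x * q x y * V x y ≤
      (1 / ℓ) * ∑ y, ∑ c : Fin ℓ → X,
        (∏ i, p (c i)) * ∑ m, V (c m) y * acceptDecoder (fun i => q (c i) y) m := by
  have hk0 : (k : ℝ) ≠ 0 := by positivity
  have h := sum_le_sum fun y (_ : y ∈ univ) => acceptDecoder_bound (ι := Fin ℓ) hp0 hp1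
    (hq0 · y) (hq1 · y) (hr y) (hV · y)
  simp only [Fintype.card_fin, ← mul_sum] at h
  calc (k / ℓ) * (1 - (1 - 1 / (k : ℝ)) ^ ℓ) * ∑ y, ∑ x, p x * q x y * V x y
      = (1 / ℓ) * (k * ((1 - (1 - 1 / (k : ℝ)) ^ ℓ) * ∑ y, ∑ x, p x * q x y * V x y)) := by
        ring
    _ ≤ (1 / ℓ) * (k * (1 / k * ∑ y, ∑ c : Fin ℓ → X,
        (∏ i, p (c i)) * ∑ m, V (c m) y * acceptDecoder (fun i => q (c i) y) m)) := by
        gcongr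
    _ = _ := by field_simp

section NSBox

variable {X Y : Type*} [Fintype X] [Fintype Y] {k : ℕ} {P : X → Fin k → Fin k → Y → ℝ}

lemma IsNSBox1.exists_marginals [Nonempty Y] (hP : IsNSBox1 k P) (hk : 0 < k) :
    ∃ (p : X → ℝ) (z : X → Y → ℝ), (∀ x, 0 ≤ p x) ∧ ∑ x, p x = 1 ∧
      (∀ x y, 0 ≤ z x y) ∧ (∀ x y, z x y ≤ p x) ∧ (∀ y, ∑ x, z x y = 1 / k) ∧
      (∀ x y, ∑ i, ∑ j, P x j i y = k * p x) ∧ (∀ x y, ∑ i, P x i i y = k * z x y) := by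
  obtain ⟨hP0, hP1, hPi, hPy⟩ := hP
  let y₀ : Y := Classical.arbitrary Y
  have hk0 : (k : ℝ) ≠ 0 := by positivity
  refine ⟨fun x => (∑ i, ∑ j, P x j i y₀) / k, fun x y => (∑ i, P x i i y) / k,
    fun x => div_nonneg (sum_nonneg fun i _ => sum_nonneg fun j _ => hP0 x j i y₀) k.cast_nonneg,
    ?_, fun x y => div_nonneg (sum_nonneg fun i _ => hP0 x i i y) k.cast_nonneg, fun x y => ?_,
    fun y => ?_,
    fun x y => ?_, fun x y => by field_simp⟩
  · rw [← sum_div, sum_comm]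
    simp [hP1, hk0]
  · refine div_le_div_of_nonneg_right (sum_le_sum fun i _ => ?_) k.cast_nonneg
    exact (single_le_sum (fun j _ => hP0 x j i y) (mem_univ i)).trans_eq (hPy x i y y₀)
  · rw [← sum_div, sum_comm]
    simp_rw [fun i => hPi i i ⟨0, hk⟩ y]
    rw [sum_comm, hP1]
  · simp_rw [hPy x _ y y₀]
    field_simp

lemma IsNSBox1.exists_acceptance [Nonempty Y] (hP : IsNSBox1 k P) (hk : 0 < k) :
    ∃ (p : X → ℝ) (q : X → Y → ℝ), (∀ x, 0 ≤ p x) ∧ ∑ x, p x = 1 ∧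
      (∀ x y, 0 ≤ q x y) ∧ (∀ x y, q x y ≤ 1) ∧ (∀ y, ∑ x, p x * q x y = 1 / k) ∧
      (∀ x y, ∑ i, ∑ j, P x j i y = k * p x) ∧
      (∀ x y, ∑ i, P x i i y = k * (p x * q x y)) := by
  obtain ⟨p, z, hp0, hp1, hz0, hzp, hz1, hPp, hPz⟩ := hP.exists_marginals hk
  have hpq (x : X) (y : Y) : p x * (z x y / p x) = z x y := by
    rw [mul_comm]
    exact div_mul_cancel_of_imp fun h => le_antisymm (h ▸ hzp x y) (hz0 x y)
  exact ⟨p, fun x y => z x y / p x, hp0, hp1, fun x y => div_nonneg (hz0 x y) (hp0 x),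
    fun x y => div_le_one_of_le₀ (hzp x y) (hp0 x), fun y => by simp only [hpq, hz1],
    hPp, fun x y => by rw [hpq, hPz]⟩

end NSBox

section MAC

variable {X1 X2 Y : Type*} [Fintype X1] [Fintype X2] [Fintype Y] (W : X1 → X2 → Y → ℝ)

lemma SNSsrSum_objective_eq {k1 k2 : ℕ} {P1 : X1 → Fin k1 → Fin k1 → Y → ℝ} {P2 : X2 → Fin k2 → Fin k2 → Y → ℝ}
    {p1 : X1 → ℝ} {z1 : X1 → Y → ℝ} {p2 : X2 → ℝ} {z2 : X2 → Y → ℝ}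
    (hp1 : ∀ x y, ∑ i, ∑ j, P1 x j i y = k1 * p1 x) (hz1 : ∀ x y, ∑ i, P1 x i i y = k1 * z1 x y)
    (hp2 : ∀ x y, ∑ i, ∑ j, P2 x j i y = k2 * p2 x) (hz2 : ∀ x y, ∑ i, P2 x i i y = k2 * z2 x y) :
    ∑ i1, ∑ i2, ∑ x1, ∑ x2, ∑ y, W x1 x2 y *
        (P1 x1 i1 i1 y * ∑ j2, P2 x2 j2 i2 y + P2 x2 i2 i2 y * ∑ j1, P1 x1 j1 i1 y) =
      k1 * k2 * (∑ y, ∑ x1, z1 x1 y * ∑ x2, p2 x2 * W x1 x2 y +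
        ∑ y, ∑ x2, z2 x2 y * ∑ x1, p1 x1 * W x1 x2 y) := by
  have hpoint (x1 : X1) (x2 : X2) (y : Y) :
      ∑ i1, ∑ i2, W x1 x2 y *
        (P1 x1 i1 i1 y * ∑ j2, P2 x2 j2 i2 y + P2 x2 i2 i2 y * ∑ j1, P1 x1 j1 i1 y) =
      k1 * k2 * (z1 x1 y * p2 x2 * W x1 x2 y + z2 x2 y * p1 x1 * W x1 x2 y) := by
    simp only [mul_add, sum_add_distrib, ← mul_sum, ← sum_mul, hp1, hz1, hp2, hz2]
    ring
  -- `sum_comm` with a fixed outer index set moves that sum innermost, on both sides at once.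
  simp only [sum_comm (s := (univ : Finset (Fin k1)))]
  simp only [sum_comm (s := (univ : Finset (Fin k2)))]
  simp only [hpoint]
  simp only [mul_add, sum_add_distrib, mul_sum]
  simp only [sum_comm (s := (univ : Finset X1))]
  simp only [sum_comm (s := (univ : Finset X2))]
  congr 1 <;>
    exact sum_congr rfl fun _ _ => sum_congr rfl fun _ _ => sum_congr rfl fun _ _ => by ring

lemma Ssum_objective_le_sum (hW0 : ∀ x1 x2 y, 0 ≤ W x1 x2 y) {ℓ1 ℓ2 : ℕ} {e1 : Fin ℓ1 → X1 → ℝ}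
    {e2 : Fin ℓ2 → X2 → ℝ} {d1 : Y → Fin ℓ1 → ℝ} {d2 : Y → Fin ℓ2 → ℝ}
    (he10 : ∀ i1 x1, 0 ≤ e1 i1 x1) (he11 : ∀ i1, ∑ x1, e1 i1 x1 = 1)
    (he20 : ∀ i2 x2, 0 ≤ e2 i2 x2) (he21 : ∀ i2, ∑ x2, e2 i2 x2 = 1)
    (hd10 : ∀ y j1, 0 ≤ d1 y j1) (hd11 : ∀ y, ∑ j1, d1 y j1 = 1)
    (hd20 : ∀ y j2, 0 ≤ d2 y j2) (hd21 : ∀ y, ∑ j2, d2 y j2 = 1) :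
    (1 / (2 * (ℓ1 : ℝ) * ℓ2)) * ∑ i1, ∑ i2, ∑ x1, ∑ x2, ∑ y,
        W x1 x2 y * e1 i1 x1 * e2 i2 x2 * (d1 y i1 + d2 y i2) ≤ ∑ x1, ∑ x2, ∑ y, W x1 x2 y := by
  have hterm (i1 i2 x1 x2 y) :
      W x1 x2 y * e1 i1 x1 * e2 i2 x2 * (d1 y i1 + d2 y i2) ≤ W x1 x2 y * 1 * 1 * (1 + 1) := by
    have := hW0 x1 x2 y
    have := he10 i1 x1
    have := he20 i2 x2
    have := hd10 y i1
    have := hd20 y i2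
    gcongr
    exacts [(single_le_sum (fun j _ => he10 i1 j) (mem_univ x1)).trans_eq (he11 i1),
      (single_le_sum (fun j _ => he20 i2 j) (mem_univ x2)).trans_eq (he21 i2),
      (single_le_sum (fun j _ => hd10 y j) (mem_univ i1)).trans_eq (hd11 y),
      (single_le_sum (fun j _ => hd20 y j) (mem_univ i2)).trans_eq (hd21 y)]
  have hW : 0 ≤ ∑ x1, ∑ x2, ∑ y, W x1 x2 y :=
    sum_nonneg fun x1 _ => sum_nonneg fun x2 _ => sum_nonneg fun y _ => hW0 x1 x2 y
  calc _ ≤ (1 / (2 * (ℓ1 : ℝ) * ℓ2)) * ∑ _i1 : Fin ℓ1, ∑ _i2 : Fin ℓ2, ∑ x1, ∑ x2, ∑ y,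
          2 * W x1 x2 y := by
        refine mul_le_mul_of_nonneg_left (sum_le_sum fun i1 _ => sum_le_sum fun i2 _ =>
          sum_le_sum fun x1 _ => sum_le_sum fun x2 _ => sum_le_sum fun y _ => ?_) (by positivity)
        exact (hterm i1 i2 x1 x2 y).trans_eq (by ring)
    _ = ((ℓ1 : ℝ) * ℓ2 / (ℓ1 * ℓ2)) * ∑ x1, ∑ x2, ∑ y, W x1 x2 y := by
        simp only [← mul_sum, sum_const, card_univ, Fintype.card_fin, nsmul_eq_mul]
        ring
    _ ≤ ∑ x1, ∑ x2, ∑ y, W x1 x2 y := mul_le_of_le_one_left hW (div_self_le_one _)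

lemma le_Ssum (hW0 : ∀ x1 x2 y, 0 ≤ W x1 x2 y) {ℓ1 ℓ2 : ℕ} {e1 : Fin ℓ1 → X1 → ℝ}
    {e2 : Fin ℓ2 → X2 → ℝ} {d1 : Y → Fin ℓ1 → ℝ} {d2 : Y → Fin ℓ2 → ℝ}
    (he10 : ∀ i1 x1, 0 ≤ e1 i1 x1) (he11 : ∀ i1, ∑ x1, e1 i1 x1 = 1)
    (he20 : ∀ i2 x2, 0 ≤ e2 i2 x2) (he21 : ∀ i2, ∑ x2, e2 i2 x2 = 1)
    (hd10 : ∀ y j1, 0 ≤ d1 y j1) (hd11 : ∀ y, ∑ j1, d1 y j1 = 1)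
    (hd20 : ∀ y j2, 0 ≤ d2 y j2) (hd21 : ∀ y, ∑ j2, d2 y j2 = 1) :
    (1 / (2 * (ℓ1 : ℝ) * ℓ2)) * ∑ i1, ∑ i2, ∑ x1, ∑ x2, ∑ y,
        W x1 x2 y * e1 i1 x1 * e2 i2 x2 * (d1 y i1 + d2 y i2) ≤ Ssum W ℓ1 ℓ2 :=
  le_csSup ⟨_, fun _ ⟨_, _, _, _, h1, h2, h3, h4, h5, h6, h7, h8, hs⟩ =>
      hs ▸ Ssum_objective_le_sum W hW0 h1 h2 h3 h4 h5 h6 h7 h8⟩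
    ⟨e1, e2, d1, d2, he10, he11, he20, he21, hd10, hd11, hd20, hd21, rfl⟩

lemma Ssum_nonneg (hW0 : ∀ x1 x2 y, 0 ≤ W x1 x2 y) (ℓ1 ℓ2 : ℕ) : 0 ≤ Ssum W ℓ1 ℓ2 := by
  refine Real.sSup_nonneg ?_
  rintro _ ⟨e1, e2, d1, d2, he10, -, he20, -, hd10, -, hd20, -, rfl⟩
  refine mul_nonneg (by positivity) (sum_nonneg fun i1 _ => sum_nonneg fun i2 _ =>
    sum_nonneg fun x1 _ => sum_nonneg fun x2 _ => sum_nonneg fun y _ => ?_)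
  exact mul_nonneg (mul_nonneg (mul_nonneg (hW0 x1 x2 y) (he10 i1 x1)) (he20 i2 x2))
    (add_nonneg (hd10 y i1) (hd20 y i2))

def successCount {ι1 ι2 : Type*} [Fintype ι1] [Fintype ι2] (c1 : ι1 → X1) (c2 : ι2 → X2)
    (D : Y → ι1 → ℝ) : ℝ :=
  ∑ y, ∑ m1, ∑ m2, W (c1 m1) (c2 m2) y * D y m1

/-- The objective of `Ssum` for the deterministic encoders `m ↦ c1 m` and `m ↦ c2 m`. -/
noncomputable def codeValue {ℓ1 ℓ2 : ℕ} (c1 : Fin ℓ1 → X1) (c2 : Fin ℓ2 → X2)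
    (D1 : Y → Fin ℓ1 → ℝ) (D2 : Y → Fin ℓ2 → ℝ) : ℝ :=
  (1 / (2 * (ℓ1 : ℝ) * ℓ2)) *
    (successCount W c1 c2 D1 + successCount (fun x2 x1 => W x1 x2) c2 c1 D2)

lemma codeValue_le_Ssum (hW0 : ∀ x1 x2 y, 0 ≤ W x1 x2 y) {ℓ1 ℓ2 : ℕ} (c1 : Fin ℓ1 → X1)
    (c2 : Fin ℓ2 → X2) {D1 : Y → Fin ℓ1 → ℝ} {D2 : Y → Fin ℓ2 → ℝ}
    (hD10 : ∀ y m, 0 ≤ D1 y m) (hD11 : ∀ y, ∑ m, D1 y m = 1)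
    (hD20 : ∀ y m, 0 ≤ D2 y m) (hD21 : ∀ y, ∑ m, D2 y m = 1) :
    codeValue W c1 c2 D1 D2 ≤ Ssum W ℓ1 ℓ2 := by
  classical
  rw [codeValue]
  convert le_Ssum W hW0 (e1 := fun m x => if c1 m = x then 1 else 0)
    (e2 := fun m x => if c2 m = x then 1 else 0) (fun _ _ => by positivity) (fun _ => by simp)
    (fun _ _ => by positivity) (fun _ => by simp) hD10 hD11 hD20 hD21 using 2
  simp only [sum_comm (s := (univ : Finset X1))]
  simp only [sum_comm (s := (univ : Finset X2))]
  simp only [successCount, mul_ite, ite_mul, mul_one, mul_zero, zero_mul, sum_ite_eq,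
    mem_univ, if_true, mul_add, sum_add_distrib]
  simp only [sum_comm (s := (univ : Finset (Fin ℓ1)))]
  simp only [sum_comm (s := (univ : Finset (Fin ℓ2)))]

lemma sum_prod_mul_successCount {ι1 ι2 : Type*} [Fintype ι1] [DecidableEq ι1] [Fintype ι2]
    [DecidableEq ι2] {p1 : X1 → ℝ} {p2 : X2 → ℝ} (hp2 : ∑ x, p2 x = 1) (D : (ι1 → X1) → Y → ι1 → ℝ) :
    ∑ c1 : ι1 → X1, ∑ c2 : ι2 → X2,
        (∏ i, p1 (c1 i)) * (∏ i, p2 (c2 i)) * successCount W c1 c2 (D c1) =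
      Fintype.card ι2 * ∑ y, ∑ c1 : ι1 → X1,
        (∏ i, p1 (c1 i)) * ∑ m, (∑ x2, p2 x2 * W (c1 m) x2 y) * D c1 y m := by
  have hc2 (c1 : ι1 → X1) :
      ∑ c2 : ι2 → X2, (∏ i, p1 (c1 i)) * (∏ i, p2 (c2 i)) * successCount W c1 c2 (D c1) =
        (∏ i, p1 (c1 i)) * ∑ y, ∑ m, D c1 y m *
          ∑ c2 : ι2 → X2, (∏ i, p2 (c2 i)) * ∑ m2, W (c1 m) (c2 m2) y := by
    simp only [successCount, mul_sum]
    simp only [sum_comm (s := (univ : Finset (ι2 → X2)))]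
    exact sum_congr rfl fun _ _ => sum_congr rfl fun _ _ => sum_congr rfl fun _ _ =>
      sum_congr rfl fun _ _ => by ring
  have hW2 (c1 : ι1 → X1) (y : Y) (m : ι1) :=
    sum_prod_mul_sum_apply (ι := ι2) hp2 fun x2 => W (c1 m) x2 y
  simp only [hc2, hW2]
  simp only [mul_sum, sum_mul]
  simp only [sum_comm (s := (univ : Finset (ι1 → X1)))]
  exact sum_congr rfl fun _ _ => sum_congr rfl fun _ _ => sum_congr rfl fun _ _ =>
      sum_congr rfl fun _ _ => by ring

lemma sum_prod_mul_codeValue {ℓ1 ℓ2 : ℕ} {p1 : X1 → ℝ} {p2 : X2 → ℝ} (hp1 : ∑ x, p1 x = 1)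
    (hp2 : ∑ x, p2 x = 1) (D1 : (Fin ℓ1 → X1) → Y → Fin ℓ1 → ℝ)
    (D2 : (Fin ℓ2 → X2) → Y → Fin ℓ2 → ℝ) :
    ∑ c1 : Fin ℓ1 → X1, ∑ c2 : Fin ℓ2 → X2,
        (∏ i, p1 (c1 i)) * (∏ i, p2 (c2 i)) * codeValue W c1 c2 (D1 c1) (D2 c2) =
      (1 / (2 * (ℓ1 : ℝ) * ℓ2)) *
        (ℓ2 * ∑ y, ∑ c1 : Fin ℓ1 → X1,
            (∏ i, p1 (c1 i)) * ∑ m, (∑ x2, p2 x2 * W (c1 m) x2 y) * D1 c1 y m +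
          ℓ1 * ∑ y, ∑ c2 : Fin ℓ2 → X2,
            (∏ i, p2 (c2 i)) * ∑ m, (∑ x1, p1 x1 * W x1 (c2 m) y) * D2 c2 y m) := by
  have h1 := sum_prod_mul_successCount W (p1 := p1) hp2 D1 (ι2 := Fin ℓ2)
  have h2 := sum_prod_mul_successCount (fun x2 x1 => W x1 x2) (p1 := p2) hp1 D2 (ι2 := Fin ℓ1)
  simp only [Fintype.card_fin] at h1 h2
  rw [← h1, ← h2, sum_comm (s := (univ : Finset (Fin ℓ2 → X2))), mul_add, mul_sum,
    mul_sum, ← sum_add_distrib]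
  refine sum_congr rfl fun c1 _ => ?_
  rw [mul_sum, mul_sum, ← sum_add_distrib]
  exact sum_congr rfl fun c2 _ => by rw [codeValue]; ring

lemma sum_prod_mul_codeValue_le_Ssum (hW0 : ∀ x1 x2 y, 0 ≤ W x1 x2 y) {ℓ1 ℓ2 : ℕ}
    {p1 : X1 → ℝ} {p2 : X2 → ℝ} (hp10 : ∀ x, 0 ≤ p1 x) (hp11 : ∑ x, p1 x = 1)
    (hp20 : ∀ x, 0 ≤ p2 x) (hp21 : ∑ x, p2 x = 1)
    {D1 : (Fin ℓ1 → X1) → Y → Fin ℓ1 → ℝ} {D2 : (Fin ℓ2 → X2) → Y → Fin ℓ2 → ℝ}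
    (hD10 : ∀ c y m, 0 ≤ D1 c y m) (hD11 : ∀ c y, ∑ m, D1 c y m = 1)
    (hD20 : ∀ c y m, 0 ≤ D2 c y m) (hD21 : ∀ c y, ∑ m, D2 c y m = 1) :
    ∑ c1 : Fin ℓ1 → X1, ∑ c2 : Fin ℓ2 → X2,
        (∏ i, p1 (c1 i)) * (∏ i, p2 (c2 i)) * codeValue W c1 c2 (D1 c1) (D2 c2) ≤
      Ssum W ℓ1 ℓ2 := by
  calc _ ≤ ∑ c1 : Fin ℓ1 → X1, ∑ c2 : Fin ℓ2 → X2,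
          (∏ i, p1 (c1 i)) * (∏ i, p2 (c2 i)) * Ssum W ℓ1 ℓ2 := by
        gcongr with c1 _ c2 _
        · exact mul_nonneg (prod_nonneg fun i _ => hp10 _) (prod_nonneg fun i _ => hp20 _)
        · exact codeValue_le_Ssum W hW0 c1 c2 (hD10 c1) (hD11 c1) (hD20 c2) (hD21 c2)
    _ = Ssum W ℓ1 ℓ2 := by
        simp only [← sum_mul, ← Fintype.sum_mul_sum, sum_prod_eq_one hp11, sum_prod_eq_one hp21,
          one_mul]

lemma le_Ssum_of_acceptance (hW0 : ∀ x1 x2 y, 0 ≤ W x1 x2 y) {ℓ1 k1 ℓ2 k2 : ℕ}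
    (hℓ1 : 0 < ℓ1) (hk1 : 0 < k1) (hℓ2 : 0 < ℓ2) (hk2 : 0 < k2)
    {p1 : X1 → ℝ} {q1 : X1 → Y → ℝ} {p2 : X2 → ℝ} {q2 : X2 → Y → ℝ}
    (hp10 : ∀ x, 0 ≤ p1 x) (hp11 : ∑ x, p1 x = 1) (hq10 : ∀ x y, 0 ≤ q1 x y)
    (hq11 : ∀ x y, q1 x y ≤ 1) (hr1 : ∀ y, ∑ x, p1 x * q1 x y = 1 / k1)
    (hp20 : ∀ x, 0 ≤ p2 x) (hp21 : ∑ x, p2 x = 1) (hq20 : ∀ x y, 0 ≤ q2 x y)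
    (hq21 : ∀ x y, q2 x y ≤ 1) (hr2 : ∀ y, ∑ x, p2 x * q2 x y = 1 / k2) :
    min (((k1 : ℝ) / ℓ1) * (1 - (1 - 1 / (k1 : ℝ)) ^ ℓ1))
        (((k2 : ℝ) / ℓ2) * (1 - (1 - 1 / (k2 : ℝ)) ^ ℓ2)) *
      ((∑ y, ∑ x1, p1 x1 * q1 x1 y * ∑ x2, p2 x2 * W x1 x2 y +
        ∑ y, ∑ x2, p2 x2 * q2 x2 y * ∑ x1, p1 x1 * W x1 x2 y) / 2) ≤ Ssum W ℓ1 ℓ2 := by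
  have : Nonempty (Fin ℓ1) := Fin.pos_iff_nonempty.1 hℓ1
  have : Nonempty (Fin ℓ2) := Fin.pos_iff_nonempty.1 hℓ2
  have hV1 (x1 : X1) (y : Y) : 0 ≤ ∑ x2, p2 x2 * W x1 x2 y :=
    sum_nonneg fun x2 _ => mul_nonneg (hp20 x2) (hW0 x1 x2 y)
  have hV2 (x2 : X2) (y : Y) : 0 ≤ ∑ x1, p1 x1 * W x1 x2 y :=
    sum_nonneg fun x1 _ => mul_nonneg (hp10 x1) (hW0 x1 x2 y)
  have hT1 := mul_sum_le_sum_acceptDecoder (ℓ := ℓ1) hk1 hp10 hp11 hq10 hq11 hr1 hV1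
  have hT2 := mul_sum_le_sum_acceptDecoder (ℓ := ℓ2) hk2 hp20 hp21 hq20 hq21 hr2 hV2
  have hA1 : 0 ≤ ∑ y, ∑ x1, p1 x1 * q1 x1 y * ∑ x2, p2 x2 * W x1 x2 y :=
    sum_nonneg fun y _ => sum_nonneg fun x1 _ =>
      mul_nonneg (mul_nonneg (hp10 x1) (hq10 x1 y)) (hV1 x1 y)
  have hA2 : 0 ≤ ∑ y, ∑ x2, p2 x2 * q2 x2 y * ∑ x1, p1 x1 * W x1 x2 y :=
    sum_nonneg fun y _ => sum_nonneg fun x2 _ =>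
      mul_nonneg (mul_nonneg (hp20 x2) (hq20 x2 y)) (hV2 x2 y)
  have hℓ1' : (ℓ1 : ℝ) ≠ 0 := by positivity
  have hℓ2' : (ℓ2 : ℝ) ≠ 0 := by positivity
  calc _ ≤ (((k1 : ℝ) / ℓ1) * (1 - (1 - 1 / (k1 : ℝ)) ^ ℓ1) *
          ∑ y, ∑ x1, p1 x1 * q1 x1 y * ∑ x2, p2 x2 * W x1 x2 y +
        ((k2 : ℝ) / ℓ2) * (1 - (1 - 1 / (k2 : ℝ)) ^ ℓ2) *
          ∑ y, ∑ x2, p2 x2 * q2 x2 y * ∑ x1, p1 x1 * W x1 x2 y) / 2 := by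
        rw [mul_div_assoc', mul_add]
        gcongr
        exacts [min_le_left _ _, min_le_right _ _]
    _ ≤ _ := div_le_div_of_nonneg_right (add_le_add hT1 hT2) zero_le_two
    _ = ∑ c1 : Fin ℓ1 → X1, ∑ c2 : Fin ℓ2 → X2, (∏ i, p1 (c1 i)) * (∏ i, p2 (c2 i)) *
          codeValue W c1 c2 (fun y => acceptDecoder fun i => q1 (c1 i) y)
            (fun y => acceptDecoder fun i => q2 (c2 i) y) := by
        rw [sum_prod_mul_codeValue W hp11 hp21 (fun c y => acceptDecoder fun i => q1 (c i) y)
          (fun c y => acceptDecoder fun i => q2 (c i) y)]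
        field_simp
    _ ≤ Ssum W ℓ1 ℓ2 := sum_prod_mul_codeValue_le_Ssum W hW0 hp10 hp11 hp20 hp21
        (fun c y => acceptDecoder_nonneg (fun i => hq10 (c i) y) (fun i => hq11 (c i) y))
        (fun _ _ => sum_acceptDecoder _)
        (fun c y => acceptDecoder_nonneg (fun i => hq20 (c i) y) (fun i => hq21 (c i) y))
        (fun _ _ => sum_acceptDecoder _)

lemma min_mul_SNSsrSum_objective_le_Ssum (hW0 : ∀ x1 x2 y, 0 ≤ W x1 x2 y) {ℓ1 k1 ℓ2 k2 : ℕ}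
    (hℓ1 : 0 < ℓ1) (hk1 : 0 < k1) (hℓ2 : 0 < ℓ2) (hk2 : 0 < k2)
    {P1 : X1 → Fin k1 → Fin k1 → Y → ℝ} {P2 : X2 → Fin k2 → Fin k2 → Y → ℝ}
    (hP1 : IsNSBox1 k1 P1) (hP2 : IsNSBox1 k2 P2) :
    min (((k1 : ℝ) / ℓ1) * (1 - (1 - 1 / (k1 : ℝ)) ^ ℓ1))
        (((k2 : ℝ) / ℓ2) * (1 - (1 - 1 / (k2 : ℝ)) ^ ℓ2)) *
      ((1 / (2 * (k1 : ℝ) * k2)) * ∑ i1, ∑ i2, ∑ x1, ∑ x2, ∑ y, W x1 x2 y *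
        (P1 x1 i1 i1 y * ∑ j2, P2 x2 j2 i2 y + P2 x2 i2 i2 y * ∑ j1, P1 x1 j1 i1 y)) ≤
      Ssum W ℓ1 ℓ2 := by
  rcases isEmpty_or_nonempty Y with hY | hY
  · simpa using Ssum_nonneg W hW0 ℓ1 ℓ2
  obtain ⟨p1, q1, hp10, hp11, hq10, hq11, hr1, hP1p, hP1q⟩ := hP1.exists_acceptance hk1
  obtain ⟨p2, q2, hp20, hp21, hq20, hq21, hr2, hP2p, hP2q⟩ := hP2.exists_acceptance hk2
  have hk1' : (k1 : ℝ) ≠ 0 := by positivity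
  have hk2' : (k2 : ℝ) ≠ 0 := by positivity
  rw [SNSsrSum_objective_eq W hP1p hP1q hP2p hP2q]
  convert le_Ssum_of_acceptance W hW0 hℓ1 hk1 hℓ2 hk2 hp10 hp11 hq10 hq11 hr1 hp20 hp21 hq20 hq21
    hr2 using 2
  field_simp

end MAC

theorem SsumNSsr_le_Ssum_general {X1 X2 Y : Type*} [Fintype X1] [Fintype X2] [Fintype Y]
    (W : X1 → X2 → Y → ℝ)
    (hW0 : ∀ x1 x2 y, 0 ≤ W x1 x2 y)
    (ℓ1 k1 ℓ2 k2 : ℕ) (hℓ1 : 0 < ℓ1) (hk1 : 0 < k1) (hℓ2 : 0 < ℓ2) (hk2 : 0 < k2) :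
    min (((k1 : ℝ) / (ℓ1 : ℝ)) * (1 - (1 - 1 / (k1 : ℝ)) ^ ℓ1))
        (((k2 : ℝ) / (ℓ2 : ℝ)) * (1 - (1 - 1 / (k2 : ℝ)) ^ ℓ2))
      * SNSsrSum W k1 k2 ≤ Ssum W ℓ1 ℓ2 := by
  have hratio {k : ℕ} (hk : 0 < k) (ℓ : ℕ) :
      0 ≤ ((k : ℝ) / ℓ) * (1 - (1 - 1 / (k : ℝ)) ^ ℓ) := by
    have h1 : 1 / (k : ℝ) ≤ 1 := div_le_one_of_le₀ (by exact_mod_cast hk) k.cast_nonneg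
    have h0 : 0 ≤ 1 / (k : ℝ) := by positivity
    exact mul_nonneg (by positivity) (sub_nonneg.2 (pow_le_one₀ (by linarith) (by linarith)))
  have hμ := le_min (hratio hk1 ℓ1) (hratio hk2 ℓ2)
  rw [SNSsrSum, ← smul_eq_mul, ← Real.sSup_smul_of_nonneg hμ]
  refine Real.sSup_le ?_ (Ssum_nonneg W hW0 ℓ1 ℓ2)
  rintro _ ⟨_, ⟨P1, P2, hP1, hP2, rfl⟩, rfl⟩
  exact min_mul_SNSsrSum_objective_le_Ssum W hW0 hℓ1 hk1 hℓ2 hk2 hP1 hP2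

/-- Quantitative comparison between independent non-signaling assisted codes and
classical codes:
`min((k1/ℓ1)(1−(1−1/k1)^{ℓ1}), (k2/ℓ2)(1−(1−1/k2)^{ℓ2})) ⋅ S_sum^{NS_SR}(W,k1,k2)
  ≤ S_sum(W,ℓ1,ℓ2)`. -/
theorem SsumNSsr_le_Ssum {X1 X2 Y : Type*} [Fintype X1] [Fintype X2] [Fintype Y]
    (W : X1 → X2 → Y → ℝ)
    (hW0 : ∀ x1 x2 y, 0 ≤ W x1 x2 y)
    (hW1 : ∀ x1 x2, ∑ y, W x1 x2 y = 1)
    (ℓ1 k1 ℓ2 k2 : ℕ) (hℓ1 : 0 < ℓ1) (hk1 : 0 < k1) (hℓ2 : 0 < ℓ2) (hk2 : 0 < k2) :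
    min (((k1 : ℝ) / (ℓ1 : ℝ)) * (1 - (1 - 1 / (k1 : ℝ)) ^ ℓ1))
        (((k2 : ℝ) / (ℓ2 : ℝ)) * (1 - (1 - 1 / (k2 : ℝ)) ^ ℓ2))
      * SNSsrSum W k1 k2 ≤ Ssum W ℓ1 ℓ2 :=
  SsumNSsr_le_Ssum_general W hW0 ℓ1 k1 ℓ2 k2 hℓ1 hk1 hℓ2 hk2
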